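/- arXiv:2106.03273 — 2 statements merged into one kernel-verified Lean document; each statement's English description precedes it below -/
import Mathlib

section
/- Consider a finite MDP model with nonempty finite state set S, nonempty finite action set A, transition probabilities p : S × A → (S → ℝ) satisfying p(s'|s,a) ≥ 0 and Σ_{s'} p(s'|s,a) = 1 for all (s,a), reward function r : S × A → ℝ, and discount γ ∈ [0,1). Let B_α be the soft Bellman optimality operator with temperature α > 0, defined by (B_α Q)(s,a) = r(s,a) + γ · Σ_{s'} p(s'|s,a) · α log(Σ_{a'} exp(Q(s',a')/α)). Then for all Q₁, Q₂ : S × A → ℝ, max_{s,a} |(B_α Q₁)(s,a) − (B_α Q₂)(s,a)| ≤ γ · max_{s,a} |Q₁(s,a) − Q₂(s,a)|. -/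
/-- The soft Bellman optimality operator with temperature `α > 0` induced by a
finite MDP model `(p, r, γ)`. -/
noncomputable def softBellman {S A : Type*} [Fintype S] [Fintype A] [Nonempty A]
    (p : S → A → S → ℝ) (r : S → A → ℝ) (γ α : ℝ) (Q : S × A → ℝ) : S × A → ℝ :=
  fun sa =>
    r sa.1 sa.2 +
      γ * ∑ s' : S, p sa.1 sa.2 s' *
        (α * Real.log (∑ a' : A, Real.exp (Q (s', a') / α)))

lemma lse_lipschitz {A : Type*} [Fintype A] [Nonempty A] {α : ℝ} (hα : 0 < α)
    (f g : A → ℝ) (M : ℝ) (h : ∀ a, f a ≤ g a + M) :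
    α * Real.log (∑ a : A, Real.exp (f a / α)) ≤
      α * Real.log (∑ a : A, Real.exp (g a / α)) + M := by
  have hposg : (0:ℝ) < ∑ a : A, Real.exp (g a / α) :=
    Finset.sum_pos (fun a _ => Real.exp_pos _) Finset.univ_nonempty
  have hposf : (0:ℝ) < ∑ a : A, Real.exp (f a / α) :=
    Finset.sum_pos (fun a _ => Real.exp_pos _) Finset.univ_nonempty
  have hle : ∑ a : A, Real.exp (f a / α) ≤
      Real.exp (M / α) * ∑ a : A, Real.exp (g a / α) := by
    rw [Finset.mul_sum]
    apply Finset.sum_le_sum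
    intro a _
    rw [← Real.exp_add, ← add_div]
    apply Real.exp_le_exp.2
    gcongr
    linarith [h a]
  have hlog : Real.log (∑ a : A, Real.exp (f a / α)) ≤
      Real.log (Real.exp (M / α) * ∑ a : A, Real.exp (g a / α)) :=
    Real.log_le_log hposf hle
  rw [Real.log_mul (Real.exp_ne_zero _) (ne_of_gt hposg), Real.log_exp] at hlog
  have := mul_le_mul_of_nonneg_left hlog (le_of_lt hα)
  calc α * Real.log (∑ a : A, Real.exp (f a / α))
      ≤ α * (M / α + Real.log (∑ a : A, Real.exp (g a / α))) := this
    _ = α * Real.log (∑ a : A, Real.exp (g a / α)) + M := by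
        field_simp; ring

/-- The soft Bellman optimality operator of a finite MDP model is a
`γ`-contraction in the sup norm. -/
theorem softBellman_contraction {S A : Type*} [Fintype S] [Fintype A]
    [Nonempty S] [Nonempty A]
    (p : S → A → S → ℝ) (r : S → A → ℝ) (γ α : ℝ)
    (hp : ∀ s a s', 0 ≤ p s a s') (hpsum : ∀ s a, ∑ s' : S, p s a s' = 1)
    (hγ0 : 0 ≤ γ) (hγ1 : γ < 1) (hα : 0 < α) (Q₁ Q₂ : S × A → ℝ) :
    Finset.univ.sup' Finset.univ_nonempty
        (fun sa : S × A => |softBellman p r γ α Q₁ sa - softBellman p r γ α Q₂ sa|)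
      ≤ γ * Finset.univ.sup' Finset.univ_nonempty
          (fun sa : S × A => |Q₁ sa - Q₂ sa|) := by
  set M := Finset.univ.sup' Finset.univ_nonempty (fun sa : S × A => |Q₁ sa - Q₂ sa|) with hMdef
  have hM : ∀ sa : S × A, |Q₁ sa - Q₂ sa| ≤ M := fun sa =>
    Finset.le_sup' (fun sa : S × A => |Q₁ sa - Q₂ sa|) (Finset.mem_univ sa)
  set L : (S × A → ℝ) → S → ℝ := fun Q s' =>
    α * Real.log (∑ a' : A, Real.exp (Q (s', a') / α)) with hL
  have hLdiff : ∀ s' : S, |L Q₁ s' - L Q₂ s'| ≤ M := by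
    intro s'
    rw [abs_sub_le_iff]
    constructor
    · have := lse_lipschitz hα (fun a' => Q₁ (s', a')) (fun a' => Q₂ (s', a')) M
        (fun a' => by have := hM (s', a'); rw [abs_sub_le_iff] at this; linarith [this.1])
      simpa [hL] using by linarith [this]
    · have := lse_lipschitz hα (fun a' => Q₂ (s', a')) (fun a' => Q₁ (s', a')) M
        (fun a' => by have := hM (s', a'); rw [abs_sub_le_iff] at this; linarith [this.2])
      simpa [hL] using by linarith [this]
  apply Finset.sup'_le
  intro sa _
  have key : softBellman p r γ α Q₁ sa - softBellman p r γ α Q₂ sa =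
      γ * ∑ s' : S, p sa.1 sa.2 s' * (L Q₁ s' - L Q₂ s') := by
    simp only [softBellman, hL]
    have h2 : ∀ X Y : ℝ, (r sa.1 sa.2 + γ * X) - (r sa.1 sa.2 + γ * Y) = γ * (X - Y) := by
      intros; ring
    rw [h2, ← Finset.sum_sub_distrib]
    congr 1
    apply Finset.sum_congr rfl
    intro s' _
    ring
  rw [key, abs_mul, abs_of_nonneg hγ0]
  apply mul_le_mul_of_nonneg_left _ hγ0
  calc |∑ s' : S, p sa.1 sa.2 s' * (L Q₁ s' - L Q₂ s')|
      ≤ ∑ s' : S, |p sa.1 sa.2 s' * (L Q₁ s' - L Q₂ s')| := Finset.abs_sum_le_sum_abs _ _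
    _ ≤ ∑ s' : S, p sa.1 sa.2 s' * M := by
        apply Finset.sum_le_sum
        intro s' _
        rw [abs_mul, abs_of_nonneg (hp _ _ _)]
        exact mul_le_mul_of_nonneg_left (hLdiff s') (hp _ _ _)
    _ = M := by rw [← Finset.sum_mul, hpsum, one_mul]
end

section
/- Consider a finite MDP with nonempty finite state set S, nonempty finite action set A, discount γ ∈ [0,1), true transition probabilities p and true reward r with 0 ≤ r(s,a) ≤ r_max for all (s,a), and an approximate model with transition probabilities p̂ and reward r̂ (both p(·|s,a) and p̂(·|s,a) are probability distributions on S for every (s,a)). Let B and B̂ denote the hard Bellman optimality operators induced by (p, r) and (p̂, r̂) respectively, i.e., (BQ)(s,a) = r(s,a) + γ Σ_{s'} p(s'|s,a) max_{a'} Q(s',a') and analogously for B̂. Suppose max_{s,a} Σ_{s'} |p(s'|s,a) − p̂(s'|s,a)| ≤ ε_p and max_{s,a} |r(s,a) − r̂(s,a)| ≤ ε_r. Then for every Q : S × A → ℝ with 0 ≤ Q(s,a) ≤ r_max/(1−γ) for all (s,a), it holds that max_{s,a} |(BQ)(s,a) − (B̂Q)(s,a)| ≤ ε_r + γ · ε_p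 · r_max / (2(1−γ)). -/
/-- The hard Bellman optimality operator induced by a finite MDP model `(p, r, γ)`. -/
noncomputable def hardBellman {S A : Type*} [Fintype S] [Fintype A] [Nonempty A]
    (p : S → A → S → ℝ) (r : S → A → ℝ) (γ : ℝ) (Q : S × A → ℝ) : S × A → ℝ :=
  fun sa =>
    r sa.1 sa.2 +
      γ * ∑ s' : S, p sa.1 sa.2 s' *
        Finset.univ.sup' Finset.univ_nonempty (fun a' : A => Q (s', a'))

/-! Subtracting the constant midpoint `(a + b) / 2` of the range of `V` does not change
`∑ p V - ∑ p̂ V`, because `p` and `p̂` have the same total mass; afterwards each term is at most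
`|p - p̂| * (b - a) / 2`. Applied to `V s' = max_{a'} Q (s', a')`, this bounds the transition part
of `B Q - B̂ Q` by `γ ε_p (b - a) / 2`, and the reward part contributes `ε_r`. -/

open Finset

theorem abs_sum_mul_sub_sum_mul_le_of_sum_eq {ι : Type*} (s : Finset ι) {f g V : ι → ℝ}
    {c d : ℝ} (hfg : ∑ i ∈ s, f i = ∑ i ∈ s, g i) (hV : ∀ i ∈ s, |V i - c| ≤ d) :
    |∑ i ∈ s, f i * V i - ∑ i ∈ s, g i * V i| ≤ (∑ i ∈ s, |f i - g i|) * d := by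
  have hshift : ∑ i ∈ s, f i * V i - ∑ i ∈ s, g i * V i
      = ∑ i ∈ s, (f i - g i) * (V i - c) := by
    have hmass : ∑ i ∈ s, (f i - g i) * c = 0 := by
      rw [← sum_mul, sum_sub_distrib, hfg, sub_self, zero_mul]
    simp only [mul_sub, sub_mul, sum_sub_distrib] at hmass ⊢
    linarith
  calc |∑ i ∈ s, f i * V i - ∑ i ∈ s, g i * V i|
      ≤ ∑ i ∈ s, |(f i - g i) * (V i - c)| := hshift ▸ abs_sum_le_sum_abs _ _
    _ ≤ ∑ i ∈ s, |f i - g i| * d := sum_le_sum fun i hi => by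
        rw [abs_mul]
        exact mul_le_mul_of_nonneg_left (hV i hi) (abs_nonneg _)
    _ = (∑ i ∈ s, |f i - g i|) * d := (sum_mul _ _ _).symm

theorem abs_sum_mul_sub_sum_mul_le_of_mem_Icc {ι : Type*} (s : Finset ι) {f g V : ι → ℝ}
    {a b : ℝ} (hfg : ∑ i ∈ s, f i = ∑ i ∈ s, g i) (hV : ∀ i ∈ s, V i ∈ Set.Icc a b) :
    |∑ i ∈ s, f i * V i - ∑ i ∈ s, g i * V i| ≤ (∑ i ∈ s, |f i - g i|) * ((b - a) / 2) :=
  abs_sum_mul_sub_sum_mul_le_of_sum_eq s (c := (a + b) / 2) hfg fun i hi => by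
    obtain ⟨hai, hib⟩ := hV i hi
    rw [abs_sub_le_iff]
    constructor <;> linarith

section Bellman

variable {S A : Type*} [Fintype A] [Nonempty A]

noncomputable def greedyValue (Q : S × A → ℝ) (s : S) : ℝ :=
  univ.sup' univ_nonempty fun a => Q (s, a)

theorem greedyValue_mem_Icc {Q : S × A → ℝ} {a b : ℝ} (hQ : ∀ sa, Q sa ∈ Set.Icc a b) (s : S) :
    greedyValue Q s ∈ Set.Icc a b := by
  obtain ⟨a₀⟩ := ‹Nonempty A›
  exact ⟨le_sup'_of_le _ (mem_univ a₀) (hQ _).1, sup'_le _ _ fun a' _ => (hQ _).2⟩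

variable [Fintype S]

theorem hardBellman_sub_hardBellman (p p' : S → A → S → ℝ) (r r' : S → A → ℝ) (γ : ℝ)
    (Q : S × A → ℝ) (s : S) (a : A) :
    hardBellman p r γ Q (s, a) - hardBellman p' r' γ Q (s, a)
      = (r s a - r' s a)
        + γ * (∑ s', p s a s' * greedyValue Q s' - ∑ s', p' s a s' * greedyValue Q s') := by
  simp only [hardBellman, greedyValue]
  ring

theorem abs_hardBellman_sub_hardBellman_le {p p' : S → A → S → ℝ} {r r' : S → A → ℝ}
    {γ εp εr a b : ℝ} {Q : S × A → ℝ} {s : S} {act : A} (hγ : 0 ≤ γ)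
    (hmass : ∑ s', p s act s' = ∑ s', p' s act s')
    (hεp : ∑ s', |p s act s' - p' s act s'| ≤ εp) (hεr : |r s act - r' s act| ≤ εr)
    (hQ : ∀ sa, Q sa ∈ Set.Icc a b) :
    |hardBellman p r γ Q (s, act) - hardBellman p' r' γ Q (s, act)|
      ≤ εr + γ * εp * ((b - a) / 2) := by
  have hba : 0 ≤ (b - a) / 2 := by linarith [(hQ (s, act)).1, (hQ (s, act)).2]
  have htransition := abs_sum_mul_sub_sum_mul_le_of_mem_Icc univ hmass
    fun s' _ => greedyValue_mem_Icc hQ s'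
  rw [hardBellman_sub_hardBellman]
  calc _ ≤ |r s act - r' s act| + |γ * (∑ s', p s act s' * greedyValue Q s'
          - ∑ s', p' s act s' * greedyValue Q s')| := abs_add_le _ _
    _ ≤ εr + γ * (εp * ((b - a) / 2)) := by
        rw [abs_mul, abs_of_nonneg hγ]
        gcongr
        exact htransition.trans (mul_le_mul_of_nonneg_right hεp hba)
    _ = εr + γ * εp * ((b - a) / 2) := by ring

end Bellman

theorem bellman_operator_error_bound_general {S A : Type*} [Fintype S] [Fintype A]
    [Nonempty S] [Nonempty A]
    (p phat : S → A → S → ℝ) (r rhat : S → A → ℝ) (γ rmax εp εr : ℝ)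
    (hpsum : ∀ s a, ∑ s' : S, p s a s' = 1)
    (hphatsum : ∀ s a, ∑ s' : S, phat s a s' = 1)
    (hγ0 : 0 ≤ γ)
    (hεp : ∀ s a, ∑ s' : S, |p s a s' - phat s a s'| ≤ εp)
    (hεr : ∀ s a, |r s a - rhat s a| ≤ εr)
    (Q : S × A → ℝ) (hQ0 : ∀ sa : S × A, 0 ≤ Q sa)
    (hQub : ∀ sa : S × A, Q sa ≤ rmax / (1 - γ)) :
    Finset.univ.sup' Finset.univ_nonempty
        (fun sa : S × A => |hardBellman p r γ Q sa - hardBellman phat rhat γ Q sa|)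
      ≤ εr + γ * εp * rmax / (2 * (1 - γ)) := by
  refine sup'_le _ _ fun ⟨s, a⟩ _ => ?_
  have hbound := abs_hardBellman_sub_hardBellman_le hγ0
    ((hpsum s a).trans (hphatsum s a).symm) (hεp s a) (hεr s a) fun sa => ⟨hQ0 sa, hQub sa⟩
  calc _ ≤ εr + γ * εp * ((rmax / (1 - γ) - 0) / 2) := hbound
    _ = εr + γ * εp * rmax / (2 * (1 - γ)) := by
      rw [sub_zero, div_div, mul_comm (1 - γ), mul_div_assoc]

/-- Bellman operator error bound: if the approximate model `(p̂, r̂)` has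
transition error at most `ε_p` in total-variation (ℓ¹) distance and reward
error at most `ε_r` in sup norm, then for any `Q` with values in
`[0, r_max / (1 - γ)]`, the induced Bellman operators satisfy
`max_{s,a} |(BQ)(s,a) − (B̂Q)(s,a)| ≤ ε_r + γ ε_p r_max / (2 (1 - γ))`. -/
theorem bellman_operator_error_bound {S A : Type*} [Fintype S] [Fintype A]
    [Nonempty S] [Nonempty A]
    (p phat : S → A → S → ℝ) (r rhat : S → A → ℝ) (γ rmax εp εr : ℝ)
    (hp : ∀ s a s', 0 ≤ p s a s') (hpsum : ∀ s a, ∑ s' : S, p s a s' = 1)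
    (hphat : ∀ s a s', 0 ≤ phat s a s') (hphatsum : ∀ s a, ∑ s' : S, phat s a s' = 1)
    (hr0 : ∀ s a, 0 ≤ r s a) (hrmax : ∀ s a, r s a ≤ rmax)
    (hγ0 : 0 ≤ γ) (hγ1 : γ < 1)
    (hεp : ∀ s a, ∑ s' : S, |p s a s' - phat s a s'| ≤ εp)
    (hεr : ∀ s a, |r s a - rhat s a| ≤ εr)
    (Q : S × A → ℝ) (hQ0 : ∀ sa : S × A, 0 ≤ Q sa)
    (hQub : ∀ sa : S × A, Q sa ≤ rmax / (1 - γ)) :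
    Finset.univ.sup' Finset.univ_nonempty
        (fun sa : S × A => |hardBellman p r γ Q sa - hardBellman phat rhat γ Q sa|)
      ≤ εr + γ * εp * rmax / (2 * (1 - γ)) :=
  bellman_operator_error_bound_general p phat r rhat γ rmax εp εr hpsum hphatsum hγ0 hεp hεr Q hQ0
    hQub
end
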